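/- Over the alphabet Σ = {a, b, $, %}, let L₁ = ba⁺ba⁺$ and L₂ = ba⁺ba⁺%$. Then (L₁ ←max-sdi L₂) ∩ (ba⁺)³%$ = { b a^m b a^n b a^k %$ : m, n, k ≥ 1 and (m ≠ n or k < n) }. -/

import Mathlib

/-- Site-directed insertion (SDI) of string `y` into string `x`. -/
def sdiStr {α : Type} (x y : List α) : Set (List α) :=
  { w | ∃ x₁ u z v x₂ : List α,
      x = x₁ ++ u ++ v ++ x₂ ∧ y = u ++ z ++ v ∧ u ≠ [] ∧ v ≠ [] ∧
      w = x₁ ++ u ++ z ++ v ++ x₂ }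

/-- Site-directed insertion extended to languages. -/
def sdiLang {α : Type} (L₁ L₂ : Set (List α)) : Set (List α) :=
  { w | ∃ x ∈ L₁, ∃ y ∈ L₂, w ∈ sdiStr x y }

/-- Alphabetic site-directed insertion of string `y` into string `x`. -/
def asdiStr {α : Type} (x y : List α) : Set (List α) :=
  { w | ∃ (x₁ x₂ z : List α) (a b : α),
      x = x₁ ++ [a] ++ [b] ++ x₂ ∧ y = [a] ++ z ++ [b] ∧
      w = x₁ ++ [a] ++ z ++ [b] ++ x₂ }

/-- Alphabetic site-directed insertion extended to languages. -/
def asdiLang {α : Type} (L₁ L₂ : Set (List α)) : Set (List α) :=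
  { w | ∃ x ∈ L₁, ∃ y ∈ L₂, w ∈ asdiStr x y }

/-- Maximal site-directed insertion of string `y` into string `x`. -/
def maxSdiStr {α : Type} (x y : List α) : Set (List α) :=
  { w | ∃ x₁ u z v x₂ : List α,
      x = x₁ ++ u ++ v ++ x₂ ∧ y = u ++ z ++ v ∧ u ≠ [] ∧ v ≠ [] ∧
      w = x₁ ++ u ++ z ++ v ++ x₂ ∧
      ¬ ∃ x₁' x₂' z' : List α, x₁' <:+ x₁ ∧ x₂' <+: x₂ ∧
          x₁' ++ x₂' ≠ [] ∧ y = x₁' ++ u ++ z' ++ v ++ x₂' }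

/-- Maximal site-directed insertion extended to languages. -/
def maxSdiLang {α : Type} (L₁ L₂ : Set (List α)) : Set (List α) :=
  { w | ∃ x ∈ L₁, ∃ y ∈ L₂, w ∈ maxSdiStr x y }

/-- Minimal site-directed insertion of string `y` into string `x`:
the words `u` and `v` of the matched outfix must be unbordered. -/
def minSdiStr {α : Type} (x y : List α) : Set (List α) :=
  { w | ∃ x₁ u z v x₂ : List α,
      x = x₁ ++ u ++ v ++ x₂ ∧ y = u ++ z ++ v ∧ u ≠ [] ∧ v ≠ [] ∧
      w = x₁ ++ u ++ z ++ v ++ x₂ ∧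
      (∀ s : List α, s <:+ u → s ≠ [] → s ≠ u → ¬ s <+: u) ∧
      (∀ p : List α, p <+: v → p ≠ [] → p ≠ v → ¬ p <:+ v) }

/-- Minimal site-directed insertion extended to languages. -/
def minSdiLang {α : Type} (L₁ L₂ : Set (List α)) : Set (List α) :=
  { w | ∃ x ∈ L₁, ∃ y ∈ L₂, w ∈ minSdiStr x y }

/-- The four-letter alphabet Σ = {a, b, $, %}. -/
inductive Sym4 : Type
  | a : Sym4
  | b : Sym4
  | dollar : Sym4
  | percent : Sym4
  deriving DecidableEq

instance : Fintype Sym4 :=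
  ⟨{Sym4.a, Sym4.b, Sym4.dollar, Sym4.percent}, fun x => by cases x <;> simp⟩

/-!
The letter `%` occurs in `w` but not in `x`, so the right part `v x₂` of the matched outfix lies
after it: `v = $`, `x₂ = ε` and hence `w = x₁ y`. Comparing the numbers of `b`'s in `w` and `y`
forces `x₁ = b a^i`, `u = b a^j`, and then `i = m`, `y = b a^n b a^k %$`. If `m = n` and
`j ≤ n ≤ k`, all of `x₁` could be added to the outfix, against maximality.
Conversely, inserting into `b a^m b a^t $` along `u = b a^t`, `v = $`, the only candidate
extension is `x₁' = b a^m`, which needs `m = n` and `t ≤ k`; so `t = 1` works when `m ≠ n`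
and `t = n` when `k < n`.
-/

namespace List

variable {α : Type*}

theorem append_cons_inj_of_count_eq [DecidableEq α] {s l t r : List α} {c : α}
    (h : s.count c = l.count c) : s ++ c :: t = l ++ c :: r ↔ s = l ∧ t = r := by
  refine ⟨fun heq => ?_, fun ⟨hs, ht⟩ => hs ▸ ht ▸ rfl⟩
  rcases append_eq_append_iff.mp heq with ⟨d, rfl, hd⟩ | ⟨d, rfl, hd⟩
  · cases d with
    | nil => simpa using hd
    | cons e d =>
      obtain ⟨rfl, -⟩ := cons_eq_cons.mp hd
      simp at h
  · cases d with
    | nil => simpa using hd.symm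
    | cons e d =>
      obtain ⟨rfl, -⟩ := cons_eq_cons.mp hd
      simp at h

theorem le_of_replicate_append_eq_replicate_append_cons {a c : α} {j n : ℕ} {s t : List α}
    (hc : c ≠ a) (h : replicate j a ++ s = replicate n a ++ c :: t) : j ≤ n := by
  by_contra! hnj
  exact hc (by simpa [getElem?_append_left, hnj] using (congrArg (·[n]?) h).symm)

theorem IsSuffix.of_append_cons_of_notMem {s l r : List α} {c : α} (h : s <:+ l ++ c :: r)
    (hc : c ∉ s) : s <:+ r := by
  rcases suffix_or_suffix_of_suffix h (suffix_append l (c :: r)) with h' | h'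
  · rcases suffix_cons_iff.mp h' with rfl | h'
    · exact absurd mem_cons_self hc
    · exact h'
  · exact absurd (h'.subset mem_cons_self) hc

end List

open List Sym4

theorem ne_or_lt_of_mem_maxSdiStr {i j p q m n k : ℕ}
    (hw : [b] ++ replicate m a ++ [b] ++ replicate n a ++ [b] ++ replicate k a ++ [percent, dollar]
      ∈ maxSdiStr ([b] ++ replicate i a ++ [b] ++ replicate j a ++ [dollar])
          ([b] ++ replicate p a ++ [b] ++ replicate q a ++ [percent, dollar])) :
    m ≠ n ∨ k < n := by
  obtain ⟨x₁, u, z, v, x₂, hx, hy, hu, hv, hw, hmax⟩ := hw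
  have hsuf : v ++ x₂ <:+ [dollar] := by
    have hvx : v ++ x₂ <:+ x₁ ++ u ++ v ++ x₂ := ⟨x₁ ++ u, by simp⟩
    have hvw : v ++ x₂ <:+ x₁ ++ u ++ z ++ v ++ x₂ := ⟨x₁ ++ u ++ z, by simp⟩
    rw [← hx] at hvx
    rw [← hw] at hvw
    refine hvw.of_append_cons_of_notMem fun h => ?_
    simpa using hvx.subset h
  obtain ⟨rfl, rfl⟩ : v = [dollar] ∧ x₂ = [] := by
    simpa [suffix_cons_iff, append_eq_singleton_iff, hv] using hsuf
  rw [show x₁ ++ u ++ z ++ [dollar] ++ [] = x₁ ++ (u ++ z ++ [dollar]) by simp, ← hy] at hw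
  have hcount : x₁.count b = 1 := by simpa [count_replicate] using congrArg (count b) hw
  obtain ⟨c, u, rfl⟩ := exists_cons_of_ne_nil hu
  obtain ⟨rfl, hyz⟩ : b = c ∧ replicate p a ++ b :: (replicate q a ++ [percent, dollar]) =
      u ++ (z ++ [dollar]) := by simpa using hy
  obtain ⟨rfl, rfl⟩ : x₁ = b :: replicate i a ∧ u = replicate j a := by
    have hx₁ : x₁.count b = (b :: replicate i a).count b := by simp [hcount, count_replicate]
    have hx' : x₁ ++ b :: (u ++ [dollar]) =
        (b :: replicate i a) ++ b :: (replicate j a ++ [dollar]) := by simpa using hx.symm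
    simpa using (append_cons_inj_of_count_eq hx₁).mp hx'
  obtain ⟨rfl, rfl, rfl⟩ : m = i ∧ n = p ∧ k = q := by
    simpa [append_cons_inj_of_count_eq, count_replicate] using hw
  have hjn : j ≤ n := le_of_replicate_append_eq_replicate_append_cons (by simp) hyz.symm
  by_contra! hmn
  obtain ⟨rfl, hjk⟩ : m = n ∧ j ≤ k := ⟨hmn.1, hjn.trans hmn.2⟩
  obtain ⟨d, rfl⟩ := Nat.exists_eq_add_of_le hjk
  exact hmax ⟨b :: replicate m a, [], replicate d a ++ [percent], suffix_refl _, nil_prefix,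
    by simp, by simp [replicate_add, -replicate_append_replicate]⟩

theorem mem_maxSdiStr_of_ne_or_lt {m n k t : ℕ} (htn : t ≤ n) (hmnk : m ≠ n ∨ k < t) :
    [b] ++ replicate m a ++ [b] ++ replicate n a ++ [b] ++ replicate k a ++ [percent, dollar] ∈
      maxSdiStr ([b] ++ replicate m a ++ [b] ++ replicate t a ++ [dollar])
        ([b] ++ replicate n a ++ [b] ++ replicate k a ++ [percent, dollar]) := by
  obtain ⟨d, rfl⟩ := Nat.exists_eq_add_of_le htn
  refine ⟨b :: replicate m a, b :: replicate t a,
    replicate d a ++ b :: (replicate k a ++ [percent]), [dollar], [], by simp,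
    by simp [replicate_add, -replicate_append_replicate], by simp, by simp,
    by simp [replicate_add, -replicate_append_replicate], ?_⟩
  rintro ⟨x₁', x₂', z', hx₁', hx₂', hne, hy⟩
  obtain rfl := prefix_nil.mp hx₂'
  rcases suffix_cons_iff.mp hx₁' with rfl | hx₁'
  · obtain ⟨hnm, hy⟩ : t + d = m ∧
        replicate k a ++ [percent, dollar] = replicate t a ++ (z' ++ [dollar]) := by
      simpa [append_cons_inj_of_count_eq, count_replicate] using hy
    have htk : t ≤ k := le_of_replicate_append_eq_replicate_append_cons (by simp) hy.symm
    omega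
  · obtain ⟨c, x₁', rfl⟩ := exists_cons_of_ne_nil (by simpa using hne)
    have hc : c = a := eq_of_mem_replicate (hx₁'.subset mem_cons_self)
    simp [hc] at hy

open Sym4 in
/-- With `L₁ = ba⁺ba⁺$` and `L₂ = ba⁺ba⁺%$`,
`(L₁ ←max-sdi L₂) ∩ (ba⁺)³%$ = { ba^m ba^n ba^k %$ : m,n,k ≥ 1, m ≠ n or k < n }`. -/
theorem maxSdi_intersection :
    maxSdiLang
        { w | ∃ i j : ℕ, 1 ≤ i ∧ 1 ≤ j ∧
            w = [b] ++ List.replicate i a ++ [b] ++ List.replicate j a ++ [dollar] }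
        { w | ∃ i j : ℕ, 1 ≤ i ∧ 1 ≤ j ∧
            w = [b] ++ List.replicate i a ++ [b] ++ List.replicate j a ++ [percent, dollar] }
      ∩ { w | ∃ i j k : ℕ, 1 ≤ i ∧ 1 ≤ j ∧ 1 ≤ k ∧
            w = [b] ++ List.replicate i a ++ [b] ++ List.replicate j a ++ [b] ++
                List.replicate k a ++ [percent, dollar] } =
    { w | ∃ m n k : ℕ, 1 ≤ m ∧ 1 ≤ n ∧ 1 ≤ k ∧ (m ≠ n ∨ k < n) ∧
        w = [b] ++ List.replicate m a ++ [b] ++ List.replicate n a ++ [b] ++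
            List.replicate k a ++ [percent, dollar] } := by
  ext w
  constructor
  · rintro ⟨⟨_, ⟨i, j, -, -, rfl⟩, _, ⟨p, q, -, -, rfl⟩, hw⟩,
      m, n, k, hm, hn, hk, rfl⟩
    exact ⟨m, n, k, hm, hn, hk, ne_or_lt_of_mem_maxSdiStr hw, rfl⟩
  · rintro ⟨m, n, k, hm, hn, hk, hmnk, rfl⟩
    refine ⟨?_, m, n, k, hm, hn, hk, rfl⟩
    rcases hmnk with hmn | hkn
    · exact ⟨_, ⟨m, 1, hm, le_rfl, rfl⟩, _, ⟨n, k, hn, hk, rfl⟩,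
        mem_maxSdiStr_of_ne_or_lt hn (.inl hmn)⟩
    · exact ⟨_, ⟨m, n, hm, hn, rfl⟩, _, ⟨n, k, hn, hk, rfl⟩,
        mem_maxSdiStr_of_ne_or_lt le_rfl (.inr hkn)⟩
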